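/- The set-valued map x ↦ A(∂f* + ρAᵀA)⁻¹(x) is single-valued: if y and z both satisfy x − ρAᵀAy ∈ ∂f*(y) and x − ρAᵀAz ∈ ∂f*(z), then Ay = Az. -/
import Mathlib


open RealInnerProductSpace

/-- The subdifferential of `f : ℝ^k → ℝ` at `x`. -/
def subdiff {k : ℕ} (f : EuclideanSpace ℝ (Fin k) → ℝ) (x : EuclideanSpace ℝ (Fin k)) :
    Set (EuclideanSpace ℝ (Fin k)) :=
  {u | ∀ y, f x + ⟪u, y - x⟫ ≤ f y}

/-- The set-valued map `x ↦ A(∂f* + ρAᵀA)⁻¹(x)` is single-valued: if `y` and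
`z` both satisfy `x − ρAᵀAy ∈ ∂f*(y)` and `x − ρAᵀAz ∈ ∂f*(z)`, then
`Ay = Az`. -/
theorem stmt17 (n m : ℕ)
    (fstar : EuclideanSpace ℝ (Fin m) → ℝ)
    (hconv : ConvexOn ℝ Set.univ fstar)
    (A : EuclideanSpace ℝ (Fin m) →L[ℝ] EuclideanSpace ℝ (Fin n))
    (ρ : ℝ) (hρ : 0 < ρ)
    (x y z : EuclideanSpace ℝ (Fin m))
    (hy : x - ρ • ContinuousLinearMap.adjoint A (A y) ∈ subdiff fstar y)
    (hz : x - ρ • ContinuousLinearMap.adjoint A (A z) ∈ subdiff fstar z) :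
    A y = A z := by
  have h1 := hy z
  have h2 := hz y
  have e : ⟪x - ρ • ContinuousLinearMap.adjoint A (A y), z - y⟫ +
      ⟪x - ρ • ContinuousLinearMap.adjoint A (A z), y - z⟫ =
      ρ * ⟪A z - A y, A z - A y⟫ := by
    simp only [inner_sub_left, inner_sub_right, real_inner_smul_left,
      ContinuousLinearMap.adjoint_inner_left, map_sub]
    ring_nf
  have key : ρ * ⟪A z - A y, A z - A y⟫ ≤ 0 := by linarith
  have h3 : ⟪A z - A y, A z - A y⟫ ≤ 0 := nonpos_of_mul_nonpos_right key hρ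
  have h4 : A z - A y = 0 := by
    have := real_inner_self_nonneg (x := A z - A y)
    have : ⟪A z - A y, A z - A y⟫ = 0 := le_antisymm h3 this
    exact inner_self_eq_zero.mp this
  exact (sub_eq_zero.mp h4).symm
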